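/- arXiv:2302.03143 — 4 statements merged into one kernel-verified Lean document; each statement's English description precedes it below -/
import Mathlib

section
/- Let f : 2^E → ℝ be a normalised (f(∅)=0) submodular function. Then for every A ⊆ E, f(A) equals the maximum of ⟨y, 1_A⟩ over all extreme points y of the base polyhedron B(f). -/
/-!
Order `E` so that the elements of `A` come first and take the greedy vector of this order,
`y e = f (S_e ∪ {e}) - f S_e` with `S_e` the set of predecessors of `e`. Telescoping makes `y`
tight on every initial segment, in particular on `A` and `E`, and diminishing returns of `f`
give `y(T) ≤ f T` for every `T`. A point of `B(f)` tight on all initial segments equals `y`,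
so `y` is the unique maximiser over `B(f)` of the sum of the initial-segment functionals: an
exposed, hence extreme, point. Conversely `y'(A) ≤ f A` is a defining inequality of `B(f)`.
-/

open Finset Function

theorem Set.mem_exposedPoints_of_unique_tight {V ι : Type*} [AddCommGroup V] [Module ℝ V]
    [TopologicalSpace V] {K : Set V} {y : V} (s : Finset ι) (ℓ : ι → StrongDual ℝ V)
    (c : ι → ℝ) (hK : ∀ x ∈ K, ∀ i ∈ s, ℓ i x ≤ c i) (hy : y ∈ K) (hyc : ∀ i ∈ s, ℓ i y = c i)
    (huniq : ∀ x ∈ K, (∀ i ∈ s, ℓ i x = c i) → x = y) :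
    y ∈ K.exposedPoints ℝ := by
  refine ⟨hy, ∑ i ∈ s, ℓ i, fun x hx => ?_⟩
  simp only [_root_.sum_apply]
  have hle : ∑ i ∈ s, ℓ i x ≤ ∑ i ∈ s, ℓ i y :=
    sum_le_sum fun i hi => (hK x hx i hi).trans_eq (hyc i hi).symm
  refine ⟨hle, fun hge => huniq x hx fun i hi => ?_⟩
  have hslack_nonneg : ∀ j ∈ s, 0 ≤ ℓ j y - ℓ j x := fun j hj =>
    sub_nonneg.2 ((hK x hx j hj).trans_eq (hyc j hj).symm)
  have hslack : ∑ j ∈ s, (ℓ j y - ℓ j x) = 0 := by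
    rw [sum_sub_distrib]; linarith
  linarith [(sum_eq_zero_iff_of_nonneg hslack_nonneg).1 hslack i hi, hyc i hi]

theorem marginal_le_of_subset {E : Type*} [DecidableEq E] {f : Finset E → ℝ}
    (hsub : ∀ S T : Finset E, f (S ∩ T) + f (S ∪ T) ≤ f S + f T) {s t : Finset E} (hst : s ⊆ t)
    {a : E} (ha : a ∉ t) : f (insert a t) - f t ≤ f (insert a s) - f s := by
  have := hsub t (insert a s)
  rw [inter_insert_of_notMem ha, inter_eq_right.2 hst, union_insert, union_eq_left.2 hst] at this
  linarith

section Greedy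

variable {E α : Type*} [Fintype E] [LinearOrder α]

def basePolyhedron (f : Finset E → ℝ) : Set (E → ℝ) :=
  {x | (∀ S : Finset E, ∑ e ∈ S, x e ≤ f S) ∧ ∑ e, x e = f univ}

def IsInitialSegment (r : E → α) (T : Finset E) : Prop :=
  ∀ ⦃a b⦄, b ∈ T → r a < r b → a ∈ T

def below (r : E → α) (e : E) : Finset E := {a | r a < r e}

variable {r : E → α}

theorem notMem_below (r : E → α) (e : E) : e ∉ below r e := by
  simp [below]

theorem isInitialSegment_below (r : E → α) (e : E) : IsInitialSegment r (below r e) := by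
  intro a b hb hab
  simp only [below, mem_filter, mem_univ, true_and] at hb ⊢
  exact hab.trans hb

theorem isInitialSegment_univ (r : E → α) : IsInitialSegment r (univ : Finset E) :=
  fun a _ _ _ => mem_univ a

theorem subset_below_of_forall_le (hr : Injective r) {a : E} {s : Finset E} (ha : a ∉ s)
    (hs : ∀ x ∈ s, r x ≤ r a) : s ⊆ below r a := by
  intro x hx
  simp only [below, mem_filter, mem_univ, true_and]
  exact (hs x hx).lt_of_ne fun h => ha (hr h ▸ hx)

variable [DecidableEq E] {f : Finset E → ℝ}

noncomputable def greedyVector (f : Finset E → ℝ) (r : E → α) (e : E) : ℝ :=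
  f (insert e (below r e)) - f (below r e)

theorem isInitialSegment_insert_below (r : E → α) (e : E) :
    IsInitialSegment r (insert e (below r e)) := by
  intro a b hb hab
  rcases mem_insert.1 hb with rfl | hb
  · simp [below, hab]
  · exact mem_insert_of_mem (isInitialSegment_below r e hb hab)

theorem eq_below_of_isInitialSegment_insert (hr : Injective r) {a : E} {s : Finset E}
    (ha : a ∉ s) (hs : ∀ x ∈ s, r x ≤ r a) (hT : IsInitialSegment r (insert a s)) :
    s = below r a := by
  refine (subset_below_of_forall_le hr ha hs).antisymm fun x hx => ?_
  have hxa : r x < r a := by simpa [below] using hx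
  exact (mem_insert.1 (hT (mem_insert_self a s) hxa)).resolve_left (ne_of_apply_ne r hxa.ne)

theorem sum_greedyVector_of_isInitialSegment (hnorm : f ∅ = 0) (hr : Injective r)
    {T : Finset E} (hT : IsInitialSegment r T) : ∑ e ∈ T, greedyVector f r e = f T := by
  induction T using induction_on_max_value r with
  | empty => simp [hnorm]
  | insert a s ha hs ih =>
    obtain rfl := eq_below_of_isInitialSegment_insert hr ha hs hT
    rw [sum_insert ha, ih (isInitialSegment_below r a), greedyVector, sub_add_cancel]

theorem sum_greedyVector_le (hsub : ∀ S T : Finset E, f (S ∩ T) + f (S ∪ T) ≤ f S + f T)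
    (hnorm : f ∅ = 0) (hr : Injective r) (T : Finset E) :
    ∑ e ∈ T, greedyVector f r e ≤ f T := by
  induction T using induction_on_max_value r with
  | empty => simp [hnorm]
  | insert a s ha hs ih =>
    have := marginal_le_of_subset hsub (subset_below_of_forall_le hr ha hs) (notMem_below r a)
    rw [sum_insert ha, greedyVector]
    linarith

theorem eq_greedyVector_of_tight {x : E → ℝ}
    (hx : ∀ T, IsInitialSegment r T → ∑ e ∈ T, x e = f T) : x = greedyVector f r := by
  funext e
  have hins := hx _ (isInitialSegment_insert_below r e)
  rw [sum_insert (notMem_below r e), hx _ (isInitialSegment_below r e)] at hins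
  rw [greedyVector, ← hins, add_sub_cancel_right]

theorem greedyVector_mem_basePolyhedron
    (hsub : ∀ S T : Finset E, f (S ∩ T) + f (S ∪ T) ≤ f S + f T) (hnorm : f ∅ = 0)
    (hr : Injective r) : greedyVector f r ∈ basePolyhedron f :=
  ⟨sum_greedyVector_le hsub hnorm hr,
    sum_greedyVector_of_isInitialSegment hnorm hr (isInitialSegment_univ r)⟩

theorem greedyVector_mem_exposedPoints
    (hsub : ∀ S T : Finset E, f (S ∩ T) + f (S ∪ T) ≤ f S + f T) (hnorm : f ∅ = 0)
    (hr : Injective r) : greedyVector f r ∈ (basePolyhedron f).exposedPoints ℝ := by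
  classical
  refine Set.mem_exposedPoints_of_unique_tight {T | IsInitialSegment r T}
    (fun T => ∑ e ∈ T, ContinuousLinearMap.proj e) f (fun x hx T _ => ?_)
    (greedyVector_mem_basePolyhedron hsub hnorm hr) (fun T hT => ?_) (fun x _ hx => ?_)
  · simpa using hx.1 T
  · simpa using sum_greedyVector_of_isInitialSegment hnorm hr (mem_filter.1 hT).2
  · exact eq_greedyVector_of_tight fun T hT => by simpa using hx T (by simpa using hT)

end Greedy

theorem exists_injective_isInitialSegment {E : Type*} [Fintype E] (A : Finset E) :
    ∃ r : E → ℕ, Injective r ∧ IsInitialSegment r A := by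
  classical
  let σ := Fintype.equivFin E
  -- elements of `A` get ranks below `card E`, the others ranks from `card E` on
  refine ⟨fun e => (if e ∈ A then 0 else Fintype.card E) + σ e, fun a b hab => ?_,
    fun a b hb hab => ?_⟩
  · have ha := (σ a).isLt
    have hb := (σ b).isLt
    refine σ.injective (Fin.ext ?_)
    simp only at hab
    split_ifs at hab <;> omega
  · have ha := (σ a).isLt
    simp only [hb, if_true] at hab
    by_contra h
    simp only [h, if_false] at hab
    omega

theorem stmt_4 {E : Type*} [Fintype E] [DecidableEq E] (f : Finset E → ℝ)
    (hsub : ∀ S T : Finset E, f (S ∩ T) + f (S ∪ T) ≤ f S + f T)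
    (hnorm : f ∅ = 0) (A : Finset E) :
    IsGreatest {r : ℝ | ∃ y ∈ Set.extremePoints ℝ
        {x : E → ℝ | (∀ S : Finset E, ∑ e ∈ S, x e ≤ f S) ∧
          ∑ e, x e = f Finset.univ},
      r = ∑ e ∈ A, y e} (f A) := by
  obtain ⟨r, hr, hA⟩ := exists_injective_isInitialSegment A
  refine ⟨⟨greedyVector f r, ?_, (sum_greedyVector_of_isInitialSegment hnorm hr hA).symm⟩, ?_⟩
  · exact exposedPoints_subset_extremePoints (greedyVector_mem_exposedPoints hsub hnorm hr)
  · rintro _ ⟨y, hy, rfl⟩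
    exact hy.1.1 A
end

section
/- Let f, g : 2^E → ℝ_{≥0} be monotone submodular functions with curvatures c_f, c_g ∈ [0,1). Define S_f(A) = Σ_{e∈A} (f({e}) − f(∅)) and S_g(A) = Σ_{e∈A} (g({e}) − g(∅)). Then for all A ⊆ E with g(A) > 0 and S_g(A) + g(∅) > 0: ((1−c_f)·S_f(A) + f(∅))/(S_g(A) + g(∅)) ≤ f(A)/g(A) ≤ (S_f(A) + f(∅))/((1−c_g)·S_g(A) + g(∅)). -/
/-!
Adding the elements of `A` one at a time, each marginal gain of `f` lies between
`(1 - c_f) (f {e} - f ∅)` (curvature) and `f {e} - f ∅` (submodularity), so `f A` is squeezed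
between `(1 - c_f) S_f(A) + f ∅` and `S_f(A) + f ∅`. Dividing the lower (upper) bound for `f` by
the upper (lower) bound for `g` gives the two ratio bounds.
-/

open Finset

section

variable {E : Type*}

/-- The modular proxy `S_f(A)` of the paper. -/
def singletonGainSum (f : Finset E → ℝ) (A : Finset E) : ℝ :=
  ∑ e ∈ A, (f {e} - f ∅)

lemma le_singletonGainSum_add [DecidableEq E] {f : Finset E → ℝ}
    (hsub : ∀ S T : Finset E, f (S ∩ T) + f (S ∪ T) ≤ f S + f T) (A : Finset E) :
    f A ≤ singletonGainSum f A + f ∅ := by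
  induction A using Finset.induction with
  | empty => simp [singletonGainSum]
  | @insert a s ha ih =>
    have hgain := hsub {a} s
    rw [singleton_inter_of_notMem ha, ← insert_eq] at hgain
    rw [singletonGainSum, sum_insert ha]
    rw [singletonGainSum] at ih
    linarith

lemma curvature_mul_singletonGainSum_add_le [DecidableEq E] {f : Finset E → ℝ} {c : ℝ}
    (hcurv : ∀ (S : Finset E) (e : E), e ∉ S → (1 - c) * (f {e} - f ∅) ≤ f (insert e S) - f S)
    (A : Finset E) : (1 - c) * singletonGainSum f A + f ∅ ≤ f A := by
  induction A using Finset.induction with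
  | empty => simp [singletonGainSum]
  | @insert a s ha ih =>
    have hgain := hcurv s a ha
    rw [singletonGainSum, sum_insert ha, mul_add]
    rw [singletonGainSum] at ih
    linarith

end

theorem stmt_9_general {E : Type*} [DecidableEq E] (f g : Finset E → ℝ)
    (hf0 : ∀ S, 0 ≤ f S) (hg0 : ∀ S, 0 ≤ g S)
    (hfsub : ∀ S T : Finset E, f (S ∩ T) + f (S ∪ T) ≤ f S + f T)
    (hgsub : ∀ S T : Finset E, g (S ∩ T) + g (S ∪ T) ≤ g S + g T)
    (cf cg : ℝ) (hcg : cg ∈ Set.Ico (0 : ℝ) 1)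
    (hfcurv : ∀ (S : Finset E) (e : E), e ∉ S →
      (1 - cf) * (f {e} - f ∅) ≤ f (insert e S) - f S)
    (hgcurv : ∀ (S : Finset E) (e : E), e ∉ S →
      (1 - cg) * (g {e} - g ∅) ≤ g (insert e S) - g S)
    (A : Finset E) (hgA : 0 < g A)
    (hden : 0 < (∑ e ∈ A, (g {e} - g ∅)) + g ∅) :
    ((1 - cf) * (∑ e ∈ A, (f {e} - f ∅)) + f ∅) /
        ((∑ e ∈ A, (g {e} - g ∅)) + g ∅) ≤ f A / g A ∧
    f A / g A ≤ ((∑ e ∈ A, (f {e} - f ∅)) + f ∅) /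
        ((1 - cg) * (∑ e ∈ A, (g {e} - g ∅)) + g ∅) := by
  have hden' : 0 < (1 - cg) * singletonGainSum g A + g ∅ := by
    unfold singletonGainSum
    -- `(1 - cg) S + g ∅ = (1 - cg) (S + g ∅) + cg g ∅`
    nlinarith [mul_pos (sub_pos.mpr hcg.2) hden, mul_nonneg hcg.1 (hg0 ∅)]
  exact ⟨div_le_div₀ (hf0 A) (curvature_mul_singletonGainSum_add_le hfcurv A) hgA
      (le_singletonGainSum_add hgsub A),
    div_le_div₀ ((hf0 A).trans (le_singletonGainSum_add hfsub A))
      (le_singletonGainSum_add hfsub A) hden' (curvature_mul_singletonGainSum_add_le hgcurv A)⟩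

theorem stmt_9 {E : Type*} [Fintype E] [DecidableEq E] (f g : Finset E → ℝ)
    (hf0 : ∀ S, 0 ≤ f S) (hg0 : ∀ S, 0 ≤ g S)
    (hfsub : ∀ S T : Finset E, f (S ∩ T) + f (S ∪ T) ≤ f S + f T)
    (hgsub : ∀ S T : Finset E, g (S ∩ T) + g (S ∪ T) ≤ g S + g T)
    (hfmono : ∀ S T : Finset E, S ⊆ T → f S ≤ f T)
    (hgmono : ∀ S T : Finset E, S ⊆ T → g S ≤ g T)
    (cf cg : ℝ) (hcf : cf ∈ Set.Ico (0 : ℝ) 1) (hcg : cg ∈ Set.Ico (0 : ℝ) 1)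
    (hfcurv : ∀ (S : Finset E) (e : E), e ∉ S →
      (1 - cf) * (f {e} - f ∅) ≤ f (insert e S) - f S)
    (hgcurv : ∀ (S : Finset E) (e : E), e ∉ S →
      (1 - cg) * (g {e} - g ∅) ≤ g (insert e S) - g S)
    (A : Finset E) (hgA : 0 < g A)
    (hden : 0 < (∑ e ∈ A, (g {e} - g ∅)) + g ∅) :
    ((1 - cf) * (∑ e ∈ A, (f {e} - f ∅)) + f ∅) /
        ((∑ e ∈ A, (g {e} - g ∅)) + g ∅) ≤ f A / g A ∧
    f A / g A ≤ ((∑ e ∈ A, (f {e} - f ∅)) + f ∅) /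
        ((1 - cg) * (∑ e ∈ A, (g {e} - g ∅)) + g ∅) :=
  stmt_9_general f g hf0 hg0 hfsub hgsub cf cg hcg hfcurv hgcurv A hgA hden
end

section
/- Let f, g : 2^E → ℝ_{≥0} be monotone submodular with curvatures c_f, c_g and f(∅), g(∅) ≥ 0. Suppose A ⊆ E satisfies (S_f(A) + f(∅))/(S_g(A) + g(∅)) ≥ (1−ε)·(S_f(A*) + f(∅))/(S_g(A*) + g(∅)) for all A* ⊆ E, where S_f(A) = Σ_{e∈A}(f({e}) − f(∅)). Then f(A)/g(A) ≥ (1−ε)(1−c_f)(1−c_g)·f(A*)/g(A*) for all A* ⊆ E (whenever all denominators are positive). -/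
/-!
Submodularity bounds `f` above by the modular function `B ↦ f ∅ + ∑_{e ∈ B} (f {e} - f ∅)`,
and curvature `c` bounds it below by `1 - c` times the same modular function. So replacing
`f / g` by the ratio of the modular surrogates loses at most a factor `1 - c_g` in one direction
and `1 - c_f` in the other, while `A` is `(1 - ε)`-optimal for the surrogate ratio.
-/

open Finset

section ModularSurrogate

variable {E : Type*} [DecidableEq E]

def modularSurrogate (h : Finset E → ℝ) (B : Finset E) : ℝ :=
  (∑ e ∈ B, (h {e} - h ∅)) + h ∅

theorem le_modularSurrogate_of_submodular {h : Finset E → ℝ}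
    (hsub : ∀ S T : Finset E, h (S ∩ T) + h (S ∪ T) ≤ h S + h T) (B : Finset E) :
    h B ≤ modularSurrogate h B := by
  induction B using Finset.induction_on with
  | empty => simp [modularSurrogate]
  | @insert e S he ih =>
    have hsub_eS := hsub {e} S
    rw [singleton_inter_of_notMem he, ← insert_eq] at hsub_eS
    rw [modularSurrogate] at ih ⊢
    rw [sum_insert he]
    linarith

theorem mul_modularSurrogate_le_of_curvature {h : Finset E → ℝ} {c : ℝ} (hc : 0 ≤ c)
    (h_empty : 0 ≤ h ∅)
    (hcurv : ∀ (S : Finset E) (e : E), e ∉ S → (1 - c) * (h {e} - h ∅) ≤ h (insert e S) - h S)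
    (B : Finset E) :
    (1 - c) * modularSurrogate h B ≤ h B := by
  have hlower : (1 - c) * (∑ e ∈ B, (h {e} - h ∅)) + h ∅ ≤ h B := by
    induction B using Finset.induction_on with
    | empty => simp
    | @insert e S he ih =>
      have := hcurv S e he
      rw [sum_insert he, mul_add]
      linarith
  rw [modularSurrogate]
  linarith [mul_nonneg hc h_empty]

variable {f g : Finset E → ℝ} {c : ℝ} (B : Finset E)

theorem mul_ratio_le_modularSurrogate_ratio (hfB : 0 ≤ f B) (hg_empty : 0 ≤ g ∅)
    (hfsub : ∀ S T : Finset E, f (S ∩ T) + f (S ∪ T) ≤ f S + f T) (hc : 0 ≤ c)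
    (hgcurv : ∀ (S : Finset E) (e : E), e ∉ S → (1 - c) * (g {e} - g ∅) ≤ g (insert e S) - g S)
    (hgB : 0 < g B) (hSgB : 0 < modularSurrogate g B) :
    (1 - c) * (f B / g B) ≤ modularSurrogate f B / modularSurrogate g B := by
  rw [← mul_div_assoc, div_le_div_iff₀ hgB hSgB]
  have hg := mul_modularSurrogate_le_of_curvature hc hg_empty hgcurv B
  have hf := le_modularSurrogate_of_submodular hfsub B
  calc (1 - c) * f B * modularSurrogate g B = f B * ((1 - c) * modularSurrogate g B) := by ring
    _ ≤ f B * g B := mul_le_mul_of_nonneg_left hg hfB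
    _ ≤ modularSurrogate f B * g B := mul_le_mul_of_nonneg_right hf hgB.le

theorem mul_modularSurrogate_ratio_le_ratio (hfB : 0 ≤ f B) (hf_empty : 0 ≤ f ∅) (hc : 0 ≤ c)
    (hfcurv : ∀ (S : Finset E) (e : E), e ∉ S → (1 - c) * (f {e} - f ∅) ≤ f (insert e S) - f S)
    (hgsub : ∀ S T : Finset E, g (S ∩ T) + g (S ∪ T) ≤ g S + g T) (hgB : 0 < g B) :
    (1 - c) * (modularSurrogate f B / modularSurrogate g B) ≤ f B / g B := by
  have hg := le_modularSurrogate_of_submodular hgsub B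
  have hf := mul_modularSurrogate_le_of_curvature hc hf_empty hfcurv B
  rw [← mul_div_assoc, div_le_div_iff₀ (hgB.trans_le hg) hgB]
  exact mul_le_mul hf hg hgB.le hfB

end ModularSurrogate

theorem stmt_10_general {E : Type*} [DecidableEq E] (f g : Finset E → ℝ)
    (hf0 : ∀ S, 0 ≤ f S) (hg0 : ∀ S, 0 ≤ g S)
    (hfsub : ∀ S T : Finset E, f (S ∩ T) + f (S ∪ T) ≤ f S + f T)
    (hgsub : ∀ S T : Finset E, g (S ∩ T) + g (S ∪ T) ≤ g S + g T)
    (cf cg ε : ℝ) (hcf : cf ∈ Set.Ico (0 : ℝ) 1) (hcg : cg ∈ Set.Ico (0 : ℝ) 1)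
    (hε : ε ∈ Set.Ioo (0 : ℝ) 1)
    (hfcurv : ∀ (S : Finset E) (e : E), e ∉ S →
      (1 - cf) * (f {e} - f ∅) ≤ f (insert e S) - f S)
    (hgcurv : ∀ (S : Finset E) (e : E), e ∉ S →
      (1 - cg) * (g {e} - g ∅) ≤ g (insert e S) - g S)
    (A : Finset E)
    (happrox : ∀ Astar : Finset E,
      (1 - ε) * (((∑ e ∈ Astar, (f {e} - f ∅)) + f ∅) /
          ((∑ e ∈ Astar, (g {e} - g ∅)) + g ∅)) ≤
        ((∑ e ∈ A, (f {e} - f ∅)) + f ∅) / ((∑ e ∈ A, (g {e} - g ∅)) + g ∅))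
    (hgA : 0 < g A) :
    ∀ Astar : Finset E, 0 < g Astar →
      0 < (∑ e ∈ Astar, (g {e} - g ∅)) + g ∅ →
      (1 - ε) * (1 - cf) * (1 - cg) * (f Astar / g Astar) ≤ f A / g A := by
  intro Astar hgAstar hSgAstar
  have hstar := mul_ratio_le_modularSurrogate_ratio Astar (hf0 Astar) (hg0 ∅) hfsub hcg.1 hgcurv hgAstar
    hSgAstar
  have hA := mul_modularSurrogate_ratio_le_ratio A (hf0 A) (hf0 ∅) hcf.1 hfcurv hgsub hgA
  calc (1 - ε) * (1 - cf) * (1 - cg) * (f Astar / g Astar)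
      = (1 - cf) * ((1 - ε) * ((1 - cg) * (f Astar / g Astar))) := by ring
    _ ≤ (1 - cf) * ((1 - ε) * (modularSurrogate f Astar / modularSurrogate g Astar)) := by
      gcongr
      · linarith [hcf.2]
      · linarith [hε.2]
    _ ≤ (1 - cf) * (modularSurrogate f A / modularSurrogate g A) := by
      gcongr
      · linarith [hcf.2]
      · exact happrox Astar
    _ ≤ f A / g A := hA

theorem stmt_10 {E : Type*} [Fintype E] [DecidableEq E] (f g : Finset E → ℝ)
    (hf0 : ∀ S, 0 ≤ f S) (hg0 : ∀ S, 0 ≤ g S)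
    (hfsub : ∀ S T : Finset E, f (S ∩ T) + f (S ∪ T) ≤ f S + f T)
    (hgsub : ∀ S T : Finset E, g (S ∩ T) + g (S ∪ T) ≤ g S + g T)
    (hfmono : ∀ S T : Finset E, S ⊆ T → f S ≤ f T)
    (hgmono : ∀ S T : Finset E, S ⊆ T → g S ≤ g T)
    (cf cg ε : ℝ) (hcf : cf ∈ Set.Ico (0 : ℝ) 1) (hcg : cg ∈ Set.Ico (0 : ℝ) 1)
    (hε : ε ∈ Set.Ioo (0 : ℝ) 1)
    (hfcurv : ∀ (S : Finset E) (e : E), e ∉ S →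
      (1 - cf) * (f {e} - f ∅) ≤ f (insert e S) - f S)
    (hgcurv : ∀ (S : Finset E) (e : E), e ∉ S →
      (1 - cg) * (g {e} - g ∅) ≤ g (insert e S) - g S)
    (A : Finset E)
    (happrox : ∀ Astar : Finset E,
      (1 - ε) * (((∑ e ∈ Astar, (f {e} - f ∅)) + f ∅) /
          ((∑ e ∈ Astar, (g {e} - g ∅)) + g ∅)) ≤
        ((∑ e ∈ A, (f {e} - f ∅)) + f ∅) / ((∑ e ∈ A, (g {e} - g ∅)) + g ∅))
    (hgA : 0 < g A) (hdenA : 0 < (∑ e ∈ A, (g {e} - g ∅)) + g ∅) :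
    ∀ Astar : Finset E, 0 < g Astar →
      0 < (∑ e ∈ Astar, (g {e} - g ∅)) + g ∅ →
      (1 - ε) * (1 - cf) * (1 - cg) * (f Astar / g Astar) ≤ f A / g A :=
  stmt_10_general f g hf0 hg0 hfsub hgsub cf cg ε hcf hcg hε hfcurv hgcurv A happrox hgA
end

section
/- Every monotone k-submodular function satisfies orthant diminishing returns: if A = (A_1,...,A_k) and B = (B_1,...,B_k) with A_j ⊆ B_j for all j, and e ∉ ∪_j B_j, then Δ_{e,i} f(B) ≤ Δ_{e,i} f(A) for every coordinate i. -/
/-- A `k`-tuple of pairwise disjoint subsets of `E`. -/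
def PairwiseDisjointTuple {E : Type*} {k : ℕ} (A : Fin k → Finset E) : Prop :=
  ∀ i j, i ≠ j → Disjoint (A i) (A j)

/-- Insert `e` into the `i`-th component of the tuple `A`. -/
def insTuple {E : Type*} [DecidableEq E] {k : ℕ} (A : Fin k → Finset E)
    (i : Fin k) (e : E) : Fin k → Finset E :=
  Function.update A i (insert e (A i))

/-- Componentwise meet of two tuples. -/
def meetTuple {E : Type*} [DecidableEq E] {k : ℕ}
    (A B : Fin k → Finset E) : Fin k → Finset E :=
  fun i => A i ∩ B i

/-- The `k`-submodular join of two tuples. -/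
def joinTuple {E : Type*} [Fintype E] [DecidableEq E] {k : ℕ}
    (A B : Fin k → Finset E) : Fin k → Finset E :=
  fun i => (A i ∪ B i) \ (Finset.univ.filter (fun j => j ≠ i)).biUnion
    (fun j => A j ∪ B j)

/-
Put `X = A + e·i` (insert `e` into `A_i`). Since `A ≤ B` and `e` lies in no `B_j`, the meet
`X ⊓ B` is `A`, and the componentwise unions of `X` and `B` form the tuple `B + e·i`, which is
still pairwise disjoint, so the join `X ⊔ B` is `B + e·i`. The submodular inequality for `X` and
`B` is then exactly `f (B + e·i) - f B ≤ f (A + e·i) - f A`.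
-/
section

variable {E : Type*} [DecidableEq E] {k : ℕ}

lemma PairwiseDisjointTuple.insTuple {A : Fin k → Finset E} (hA : PairwiseDisjointTuple A)
    {e : E} (he : ∀ j, e ∉ A j) (i : Fin k) : PairwiseDisjointTuple (insTuple A i e) := by
  intro a b hab
  rcases eq_or_ne a i with rfl | ha
  · simp only [_root_.insTuple, Function.update_self, Function.update_of_ne hab.symm,
      Finset.disjoint_insert_left]
    exact ⟨he b, hA a b hab⟩
  rcases eq_or_ne b i with rfl | hb
  · simp only [_root_.insTuple, Function.update_self, Function.update_of_ne ha,
      Finset.disjoint_insert_right]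
    exact ⟨he a, hA a b hab⟩
  simp only [_root_.insTuple, Function.update_of_ne ha, Function.update_of_ne hb]
  exact hA a b hab

lemma insTuple_union_of_le {A B : Fin k → Finset E} (hAB : ∀ j, A j ⊆ B j) (i : Fin k) (e : E)
    (j : Fin k) : insTuple A i e j ∪ B j = insTuple B i e j := by
  rcases eq_or_ne j i with rfl | hj
  · simp only [insTuple, Function.update_self, Finset.insert_union,
      Finset.union_eq_right.mpr (hAB j)]
  · simp only [insTuple, Function.update_of_ne hj, Finset.union_eq_right.mpr (hAB j)]

lemma meetTuple_insTuple_of_le {A B : Fin k → Finset E} (hAB : ∀ j, A j ⊆ B j) {i : Fin k}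
    {e : E} (he : e ∉ B i) : meetTuple (insTuple A i e) B = A := by
  funext j
  rcases eq_or_ne j i with rfl | hj
  · simp only [meetTuple, insTuple, Function.update_self, Finset.insert_inter_of_notMem he,
      Finset.inter_eq_left.mpr (hAB j)]
  · simp only [meetTuple, insTuple, Function.update_of_ne hj, Finset.inter_eq_left.mpr (hAB j)]

section Join

variable [Fintype E]

lemma joinTuple_eq_of_union_eq {A B C : Fin k → Finset E} (h : ∀ j, A j ∪ B j = C j) :
    joinTuple A B = joinTuple C C := by
  funext j
  simp only [joinTuple, h, Finset.union_self]

lemma joinTuple_self {C : Fin k → Finset E} (hC : PairwiseDisjointTuple C) :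
    joinTuple C C = C := by
  funext j
  simp only [joinTuple, Finset.union_self, Finset.sdiff_eq_self_iff_disjoint,
    Finset.disjoint_biUnion_right, Finset.mem_filter, Finset.mem_univ, true_and]
  exact fun l hl => hC j l hl.symm

lemma joinTuple_insTuple_of_le {A B : Fin k → Finset E} (hB : PairwiseDisjointTuple B)
    (hAB : ∀ j, A j ⊆ B j) {e : E} (he : ∀ j, e ∉ B j) (i : Fin k) :
    joinTuple (insTuple A i e) B = insTuple B i e := by
  rw [joinTuple_eq_of_union_eq (insTuple_union_of_le hAB i e), joinTuple_self (hB.insTuple he i)]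

end Join

end

theorem stmt_17_general {E : Type*} [Fintype E] [DecidableEq E] (k : ℕ)
    (f : (Fin k → Finset E) → ℝ)
    (hsub : ∀ A B : Fin k → Finset E, PairwiseDisjointTuple A →
      PairwiseDisjointTuple B →
      f (meetTuple A B) + f (joinTuple A B) ≤ f A + f B)
    (A B : Fin k → Finset E) (hA : PairwiseDisjointTuple A)
    (hB : PairwiseDisjointTuple B) (hAB : ∀ j, A j ⊆ B j)
    (e : E) (he : ∀ j, e ∉ B j) (i : Fin k) :
    f (insTuple B i e) - f B ≤ f (insTuple A i e) - f A := by
  have heA : ∀ j, e ∉ A j := fun j h => he j (hAB j h)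
  have key := hsub (insTuple A i e) B (hA.insTuple heA i) hB
  rw [meetTuple_insTuple_of_le hAB (he i), joinTuple_insTuple_of_le hB hAB he i] at key
  linarith

theorem stmt_17 {E : Type*} [Fintype E] [DecidableEq E] (k : ℕ)
    (f : (Fin k → Finset E) → ℝ)
    (hsub : ∀ A B : Fin k → Finset E, PairwiseDisjointTuple A →
      PairwiseDisjointTuple B →
      f (meetTuple A B) + f (joinTuple A B) ≤ f A + f B)
    (hmono : ∀ A B : Fin k → Finset E, PairwiseDisjointTuple A →
      PairwiseDisjointTuple B → (∀ i, A i ⊆ B i) → f A ≤ f B)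
    (A B : Fin k → Finset E) (hA : PairwiseDisjointTuple A)
    (hB : PairwiseDisjointTuple B) (hAB : ∀ j, A j ⊆ B j)
    (e : E) (he : ∀ j, e ∉ B j) (i : Fin k) :
    f (insTuple B i e) - f B ≤ f (insTuple A i e) - f A :=
  stmt_17_general k f hsub A B hA hB hAB e he i
end
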